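/- arXiv:1210.1438 — 4 statements merged into one kernel-verified Lean document; each statement's English description precedes it below -/
import Mathlib

section
/- Let J be a B(H)-ideal and S ∈ J. Then the set of all finite sums Σ_{i=1}^m A_iSB_i with A_i, B_i ∈ J equals J(S)J, and this set also equals J²(S), the set of all finite sums Σᵢ C_iD_iX_i with C_i, D_i ∈ J and X_i ∈ (S). -/
/-!
Every two-sided ideal of `B(H)` is self-adjoint: since `‖|T| x‖ = ‖T x‖`, Douglas' lemma gives
`T = V |T|` and `|T| = W T`, hence `T* = |T| V* = W T V*`. So for `x ∈ I` and `y ∈ K` in two ideals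
the factors of `x y` can be swapped: writing `(x y)** = A y* x* B` gives `x y = (A y*) (x* B)`.
This turns `J(S)J` into `J²(S)` and back term by term. The equality with the sums `Σ Aᵢ S Bᵢ` holds because the operators `X` with
`J X J ⊆ {Σ Aᵢ S Bᵢ}` form an ideal of `B(H)` containing `S`.
-/

open scoped BigOperators
open TopologicalSpace

variable {H : Type*} [NormedAddCommGroup H] [InnerProductSpace ℂ H] [CompleteSpace H]

/-- `J` is a two-sided ideal of `B(H)`: an additive subgroup closed under left and
right multiplication by arbitrary bounded operators. -/
def IsBHIdeal (J : Set (H →L[ℂ] H)) : Prop :=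
  (0 : H →L[ℂ] H) ∈ J ∧
  (∀ x ∈ J, ∀ y ∈ J, x + y ∈ J) ∧
  (∀ x ∈ J, -x ∈ J) ∧
  ∀ (A : H →L[ℂ] H), ∀ x ∈ J, A * x ∈ J ∧ x * A ∈ J

/-- `I` is a `J`-ideal: an additive subgroup of `B(H)` contained in `J` and closed
under left and right multiplication by elements of `J`. -/
def IsSubideal (J I : Set (H →L[ℂ] H)) : Prop :=
  I ⊆ J ∧ (0 : H →L[ℂ] H) ∈ I ∧
  (∀ x ∈ I, ∀ y ∈ I, x + y ∈ I) ∧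
  (∀ x ∈ I, -x ∈ I) ∧
  ∀ A ∈ J, ∀ x ∈ I, A * x ∈ I ∧ x * A ∈ I

/-- A linear `J`-ideal: a `J`-ideal closed under multiplication by complex scalars. -/
def IsLinearSubideal (J I : Set (H →L[ℂ] H)) : Prop :=
  IsSubideal J I ∧ ∀ (c : ℂ), ∀ x ∈ I, c • x ∈ I

/-- A real linear `J`-ideal: a `J`-ideal closed under multiplication by real scalars. -/
def IsRealSubideal (J I : Set (H →L[ℂ] H)) : Prop :=
  IsSubideal J I ∧ ∀ (r : ℝ), ∀ x ∈ I, r • x ∈ I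

/-- `(𝒮)`: the smallest two-sided ideal of `B(H)` containing `𝒮`. -/
def genBH (𝒮 : Set (H →L[ℂ] H)) : Set (H →L[ℂ] H) :=
  ⋂₀ {I | IsBHIdeal I ∧ 𝒮 ⊆ I}

/-- `⟨𝒮⟩_J`: the smallest `J`-ideal containing `𝒮`. -/
def genSub (J 𝒮 : Set (H →L[ℂ] H)) : Set (H →L[ℂ] H) :=
  ⋂₀ {I | IsSubideal J I ∧ 𝒮 ⊆ I}

/-- `(𝒮)_J`: the smallest linear `J`-ideal containing `𝒮`. -/
def genLin (J 𝒮 : Set (H →L[ℂ] H)) : Set (H →L[ℂ] H) :=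
  ⋂₀ {I | IsLinearSubideal J I ∧ 𝒮 ⊆ I}

/-- `(𝒮)_J^ℝ`: the smallest real linear `J`-ideal containing `𝒮`. -/
def genReal (J 𝒮 : Set (H →L[ℂ] H)) : Set (H →L[ℂ] H) :=
  ⋂₀ {I | IsRealSubideal J I ∧ 𝒮 ⊆ I}

/-- `J(𝒮)`: all finite sums `Σ Aᵢ Xᵢ` with `Aᵢ ∈ J` and `Xᵢ ∈ (𝒮)`. -/
def JGen (J 𝒮 : Set (H →L[ℂ] H)) : Set (H →L[ℂ] H) :=
  {T | ∃ (n : ℕ) (A X : Fin n → (H →L[ℂ] H)),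
    (∀ i, A i ∈ J ∧ X i ∈ genBH 𝒮) ∧ T = ∑ i, A i * X i}

/-- `J(𝒮)J`: all finite sums `Σ Aᵢ Xᵢ Bᵢ` with `Aᵢ, Bᵢ ∈ J` and `Xᵢ ∈ (𝒮)`. -/
def JGenJ (J 𝒮 : Set (H →L[ℂ] H)) : Set (H →L[ℂ] H) :=
  {T | ∃ (n : ℕ) (A X B : Fin n → (H →L[ℂ] H)),
    (∀ i, A i ∈ J ∧ X i ∈ genBH 𝒮 ∧ B i ∈ J) ∧ T = ∑ i, A i * X i * B i}

/-- `JS + SJ + J(S)J = {AS + SB + Y : A, B ∈ J, Y ∈ J(S)J}`. -/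
def JSplus (J : Set (H →L[ℂ] H)) (S : H →L[ℂ] H) : Set (H →L[ℂ] H) :=
  {T | ∃ A ∈ J, ∃ B ∈ J, ∃ Y ∈ JGenJ J {S}, T = A * S + S * B + Y}

/-- `K(H)`: the compact operators on `H`. -/
def KH : Set (H →L[ℂ] H) := {T | IsCompactOperator ⇑T}

/-- `T` is a finite-rank operator: its range is finite-dimensional. -/
def IsFiniteRank (T : H →L[ℂ] H) : Prop :=
  FiniteDimensional ℂ (LinearMap.range (T : H →ₗ[ℂ] H))

open ContinuousLinearMap

/-- Douglas' lemma. -/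
theorem ContinuousLinearMap.exists_comp_eq_of_norm_le {𝕜 E F G : Type*} [RCLike 𝕜]
    [NormedAddCommGroup E] [NormedSpace 𝕜 E]
    [NormedAddCommGroup F] [InnerProductSpace 𝕜 F] [CompleteSpace F]
    [NormedAddCommGroup G] [NormedSpace 𝕜 G] [CompleteSpace G]
    (T : E →L[𝕜] F) (R : E →L[𝕜] G) (C : ℝ) (h : ∀ x, ‖R x‖ ≤ C * ‖T x‖) :
    ∃ W : F →L[𝕜] G, W ∘L T = R := by
  set M := (LinearMap.range (T : E →ₗ[𝕜] F)).topologicalClosure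
  let e : E →ₗ[𝕜] M := (T : E →ₗ[𝕜] F).codRestrict M fun x =>
    (LinearMap.range (T : E →ₗ[𝕜] F)).le_topologicalClosure ⟨x, rfl⟩
  have he : DenseRange e := by
    rw [DenseRange, Subtype.dense_iff, ← Set.range_comp]
    exact subset_rfl
  refine ⟨((R : E →ₗ[𝕜] G).extendOfNorm e) ∘L M.orthogonalProjectionOnto, ?_⟩
  ext x
  have hx : M.orthogonalProjectionOnto (T x) = e x :=
    M.orthogonalProjectionOnto_mem_subspace_eq_self (e x)
  simp only [ContinuousLinearMap.comp_apply, hx]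
  exact LinearMap.extendOfNorm_eq he ⟨C, h⟩ x

theorem ContinuousLinearMap.norm_cfcAbs_apply (T : H →L[ℂ] H) (x : H) :
    ‖CFC.abs T x‖ = ‖T x‖ := by
  have habs : adjoint (CFC.abs T) ∘L CFC.abs T = adjoint T ∘L T := by
    rw [← star_eq_adjoint, ← star_eq_adjoint, ← mul_def, ← mul_def,
      (CFC.abs_nonneg T).isSelfAdjoint.star_eq, CFC.abs_mul_abs]
  rw [← pow_left_inj₀ (norm_nonneg _) (norm_nonneg _) two_ne_zero,
    apply_norm_sq_eq_inner_adjoint_left, apply_norm_sq_eq_inner_adjoint_left, habs]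

theorem ContinuousLinearMap.exists_star_eq_mul_mul (T : H →L[ℂ] H) :
    ∃ A B : H →L[ℂ] H, star T = A * T * B := by
  have hle : ∀ x, ‖CFC.abs T x‖ ≤ 1 * ‖T x‖ := fun x => by rw [norm_cfcAbs_apply, one_mul]
  have hge : ∀ x, ‖T x‖ ≤ 1 * ‖CFC.abs T x‖ := fun x => by rw [norm_cfcAbs_apply, one_mul]
  obtain ⟨W, hW⟩ := T.exists_comp_eq_of_norm_le (CFC.abs T) 1 hle
  obtain ⟨V, hV⟩ := (CFC.abs T).exists_comp_eq_of_norm_le T 1 hge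
  refine ⟨W, star V, ?_⟩
  calc star T = star (V * CFC.abs T) := by rw [mul_def, hV]
    _ = CFC.abs T * star V := by rw [star_mul, (CFC.abs_nonneg T).isSelfAdjoint.star_eq]
    _ = W * T * star V := by rw [mul_def W, hW]

def sandwichSums {R : Type*} [Semiring R] (J : Set R) (S : R) : AddSubmonoid R where
  carrier := {T | ∃ (m : ℕ) (A B : Fin m → R), (∀ i, A i ∈ J ∧ B i ∈ J) ∧ T = ∑ i, A i * S * B i}
  zero_mem' := ⟨0, ![], ![], fun i => i.elim0, by simp⟩
  add_mem' := by
    rintro _ _ ⟨m, A, B, hAB, rfl⟩ ⟨m', A', B', hAB', rfl⟩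
    refine ⟨m + m', Fin.append A A', Fin.append B B', fun i => ?_, by simp [Fin.sum_univ_add]⟩
    refine Fin.addCases (fun j => ?_) (fun j => ?_) i
    · simpa using hAB j
    · simpa using hAB' j

theorem mul_mul_mem_sandwichSums {R : Type*} [Semiring R] {J : Set R} {S A B : R}
    (hA : A ∈ J) (hB : B ∈ J) : A * S * B ∈ sandwichSums J S :=
  ⟨1, ![A], ![B], fun i => by fin_cases i; exact ⟨hA, hB⟩, by simp⟩

variable {J I K 𝒮 : Set (H →L[ℂ] H)}

section

omit [CompleteSpace H]

namespace IsBHIdeal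

theorem neg_mem (hJ : IsBHIdeal J) {x : H →L[ℂ] H} (hx : x ∈ J) : -x ∈ J :=
  hJ.2.2.1 x hx

theorem mul_mem_left (hJ : IsBHIdeal J) (A : H →L[ℂ] H) {x : H →L[ℂ] H} (hx : x ∈ J) :
    A * x ∈ J :=
  (hJ.2.2.2 A x hx).1

theorem mul_mem_right (hJ : IsBHIdeal J) (A : H →L[ℂ] H) {x : H →L[ℂ] H} (hx : x ∈ J) :
    x * A ∈ J :=
  (hJ.2.2.2 A x hx).2

theorem setOf_mul_mul_mem (hJ : IsBHIdeal J) (P : AddSubmonoid (H →L[ℂ] H)) :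
    IsBHIdeal {X | ∀ A ∈ J, ∀ B ∈ J, A * X * B ∈ P} := by
  refine ⟨fun A _ B _ => by simp, fun x hx y hy A hA B hB => ?_, fun x hx A hA B hB => ?_,
    fun W x hx => ⟨fun A hA B hB => ?_, fun A hA B hB => ?_⟩⟩
  · rw [mul_add, add_mul]
    exact P.add_mem (hx A hA B hB) (hy A hA B hB)
  · rw [mul_neg, ← neg_mul]
    exact hx (-A) (hJ.neg_mem hA) B hB
  · rw [← mul_assoc]
    exact hx _ (hJ.mul_mem_right W hA) B hB
  · rw [← mul_assoc, mul_assoc _ W]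
    exact hx A hA _ (hJ.mul_mem_left W hB)

end IsBHIdeal

theorem subset_genBH : 𝒮 ⊆ genBH 𝒮 :=
  fun _ hx => Set.mem_sInter.mpr fun _ hI => hI.2 hx

theorem genBH_subset (hI : IsBHIdeal I) (h : 𝒮 ⊆ I) : genBH 𝒮 ⊆ I :=
  fun _ hx => Set.mem_sInter.mp hx I ⟨hI, h⟩

theorem isBHIdeal_genBH : IsBHIdeal (genBH 𝒮) := by
  refine ⟨Set.mem_sInter.mpr fun I hI => hI.1.1, fun x hx y hy => ?_, fun x hx => ?_,
    fun A x hx => ⟨?_, ?_⟩⟩ <;> refine Set.mem_sInter.mpr fun I hI => ?_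
  · exact hI.1.2.1 x (Set.mem_sInter.mp hx I hI) y (Set.mem_sInter.mp hy I hI)
  · exact hI.1.neg_mem (Set.mem_sInter.mp hx I hI)
  · exact hI.1.mul_mem_left A (Set.mem_sInter.mp hx I hI)
  · exact hI.1.mul_mem_right A (Set.mem_sInter.mp hx I hI)

theorem mul_mul_mem_sandwichSums_of_mem_genBH (hJ : IsBHIdeal J) {S X A B : H →L[ℂ] H}
    (hX : X ∈ genBH {S}) (hA : A ∈ J) (hB : B ∈ J) : A * X * B ∈ sandwichSums J S := by
  refine genBH_subset (hJ.setOf_mul_mul_mem (sandwichSums J S)) ?_ hX A hA B hB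
  rintro _ rfl A hA B hB
  exact mul_mul_mem_sandwichSums hA hB

end

namespace IsBHIdeal

theorem star_mem (hJ : IsBHIdeal J) {x : H →L[ℂ] H} (hx : x ∈ J) : star x ∈ J := by
  obtain ⟨A, B, hAB⟩ := x.exists_star_eq_mul_mul
  rw [hAB]
  exact hJ.mul_mem_right B (hJ.mul_mem_left A hx)

theorem exists_mul_eq_mul_swap (hI : IsBHIdeal I) (hK : IsBHIdeal K) {x y : H →L[ℂ] H}
    (hx : x ∈ I) (hy : y ∈ K) : ∃ y' ∈ K, ∃ x' ∈ I, x * y = y' * x' := by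
  obtain ⟨A, B, hAB⟩ := (star (x * y)).exists_star_eq_mul_mul
  refine ⟨A * star y, hK.mul_mem_left A (hK.star_mem hy),
    star x * B, hI.mul_mem_right B (hI.star_mem hx), ?_⟩
  rw [← star_star (x * y), hAB, star_mul]
  noncomm_ring

end IsBHIdeal

theorem stmt_1_general (J : Set (H →L[ℂ] H)) (hJ : IsBHIdeal J)
    (S : H →L[ℂ] H) :
    {T | ∃ (m : ℕ) (A B : Fin m → (H →L[ℂ] H)),
        (∀ i, A i ∈ J ∧ B i ∈ J) ∧ T = ∑ i, A i * S * B i} = JGenJ J {S} ∧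
    JGenJ J {S} =
      {T | ∃ (m : ℕ) (C D X : Fin m → (H →L[ℂ] H)),
        (∀ i, C i ∈ J ∧ D i ∈ J ∧ X i ∈ genBH {S}) ∧ T = ∑ i, C i * D i * X i} := by
  have hgen : IsBHIdeal (genBH {S}) := isBHIdeal_genBH
  refine ⟨Set.Subset.antisymm ?_ ?_, Set.Subset.antisymm ?_ ?_⟩
  · rintro _ ⟨m, A, B, hAB, rfl⟩
    exact ⟨m, A, fun _ => S, B, fun i => ⟨(hAB i).1, subset_genBH rfl, (hAB i).2⟩, rfl⟩
  · rintro _ ⟨n, A, X, B, hAXB, rfl⟩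
    exact (sandwichSums J S).sum_mem fun i _ =>
      mul_mul_mem_sandwichSums_of_mem_genBH hJ (hAXB i).2.1 (hAXB i).1 (hAXB i).2.2
  · rintro _ ⟨n, A, X, B, hAXB, rfl⟩
    choose D hD Y hY hXB using fun i => hgen.exists_mul_eq_mul_swap hJ (hAXB i).2.1 (hAXB i).2.2
    refine ⟨n, A, D, Y, fun i => ⟨(hAXB i).1, hD i, hY i⟩, Finset.sum_congr rfl fun i _ => ?_⟩
    rw [mul_assoc, hXB, mul_assoc]
  · rintro _ ⟨n, C, D, X, hCDX, rfl⟩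
    choose Y hY B hB hDX using fun i => hJ.exists_mul_eq_mul_swap hgen (hCDX i).2.1 (hCDX i).2.2
    refine ⟨n, C, Y, B, fun i => ⟨(hCDX i).1, hY i, hB i⟩, Finset.sum_congr rfl fun i _ => ?_⟩
    rw [mul_assoc, hDX, mul_assoc]

/-- `{Σ AᵢSBᵢ : Aᵢ, Bᵢ ∈ J} = J(S)J = J²(S)`. -/
theorem stmt_1 (J : Set (H →L[ℂ] H)) (hJ : IsBHIdeal J)
    (S : H →L[ℂ] H) (hS : S ∈ J) :
    {T | ∃ (m : ℕ) (A B : Fin m → (H →L[ℂ] H)),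
        (∀ i, A i ∈ J ∧ B i ∈ J) ∧ T = ∑ i, A i * S * B i} = JGenJ J {S} ∧
    JGenJ J {S} =
      {T | ∃ (m : ℕ) (C D X : Fin m → (H →L[ℂ] H)),
        (∀ i, C i ∈ J ∧ D i ∈ J ∧ X i ∈ genBH {S}) ∧ T = ∑ i, C i * D i * X i} :=
  stmt_1_general J hJ S
end

section
/- There exist a B(H)-ideal J and an operator S ∈ J such that J(S)J is a proper subset of JS + SJ + J(S)J; specifically, there exists A ∈ J with AS ∉ J(S)J. (Such an example is S the diagonal operator with singular values ⟨1/n⟩ and J = (S).) -/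
/-!
Take for `J` the operators whose approximation numbers
`aₙ(T) = inf {‖T - R‖ : rank R ≤ n}` are `O(1/n)`, and for `S` a copy of
`diag (1, 1/2, 1/3, …)` inside `H`, so that `S ∈ J`. Since `a_{n+m}(TU) ≤ aₙ(T) aₘ(U)`,
every product `AXB` of three elements of `J`, hence every element of `J(S)J`, has
approximation numbers `O(1/n³)`. But `aₙ(S²) = 1/(n+1)²`, so `S · S ∈ JS` is not in `J(S)J`.
-/

open scoped BigOperators
open TopologicalSpace

variable {H : Type*} [NormedAddCommGroup H] [InnerProductSpace ℂ H] [CompleteSpace H]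

open scoped lp

section ApproximationNumbers

variable {𝕜 E F G : Type*} [NontriviallyNormedField 𝕜]
  [NormedAddCommGroup E] [NormedSpace 𝕜 E] [NormedAddCommGroup F] [NormedSpace 𝕜 F]
  [NormedAddCommGroup G] [NormedSpace 𝕜 G]

-- Indexed from `0`: `approxNum 0 T = ‖T‖`.
noncomputable def approxNum (n : ℕ) (T : E →L[𝕜] F) : ℝ :=
  ⨅ R : {R : E →L[𝕜] F // (R : E →ₗ[𝕜] F).rank ≤ n}, ‖T - R‖

instance (n : ℕ) : Nonempty {R : E →L[𝕜] F // (R : E →ₗ[𝕜] F).rank ≤ n} :=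
  ⟨⟨0, by simp⟩⟩

lemma approxNum_nonneg (n : ℕ) (T : E →L[𝕜] F) : 0 ≤ approxNum n T :=
  le_ciInf fun _ => norm_nonneg _

lemma approxNum_le (T : E →L[𝕜] F) {n : ℕ} {R : E →L[𝕜] F}
    (hR : (R : E →ₗ[𝕜] F).rank ≤ n) : approxNum n T ≤ ‖T - R‖ :=
  ciInf_le (f := fun R : {R : E →L[𝕜] F // (R : E →ₗ[𝕜] F).rank ≤ n} => ‖T - R‖)
    ⟨0, by rintro _ ⟨R, rfl⟩; exact norm_nonneg _⟩ ⟨R, hR⟩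

lemma le_approxNum {n : ℕ} {T : E →L[𝕜] F} {c : ℝ}
    (h : ∀ R : E →L[𝕜] F, (R : E →ₗ[𝕜] F).rank ≤ n → c ≤ ‖T - R‖) : c ≤ approxNum n T :=
  le_ciInf fun R => h R R.2

lemma approxNum_le_norm (n : ℕ) (T : E →L[𝕜] F) : approxNum n T ≤ ‖T‖ := by
  simpa using approxNum_le T (n := n) (R := 0) (by simp)

lemma approxNum_antitone (T : E →L[𝕜] F) : Antitone fun n => approxNum n T :=
  fun _ _ hmn => le_approxNum fun _ hR => approxNum_le T (hR.trans (by exact_mod_cast hmn))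

lemma approxNum_neg (n : ℕ) (T : E →L[𝕜] F) : approxNum n (-T) = approxNum n T := by
  have key : ∀ T : E →L[𝕜] F, approxNum n (-T) ≤ approxNum n T := fun T =>
    le_approxNum fun R hR => by
      refine (approxNum_le (-T) (R := -R) ?_).trans_eq (by rw [neg_sub_neg, norm_sub_rev])
      rwa [ContinuousLinearMap.toLinearMap_neg, LinearMap.rank, LinearMap.range_neg]
  exact le_antisymm (key T) (by simpa using key (-T))

lemma approxNum_add_le (n m : ℕ) (T U : E →L[𝕜] F) :
    approxNum (n + m) (T + U) ≤ approxNum n T + approxNum m U :=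
  le_ciInf_add_ciInf fun R S => by
    have hrank : ((R + S : E →L[𝕜] F) : E →ₗ[𝕜] F).rank ≤ ↑(n + m) := by
      push_cast
      exact (LinearMap.rank_add_le _ _).trans (add_le_add R.2 S.2)
    calc approxNum (n + m) (T + U) ≤ ‖(T - R) + (U - S)‖ := by
          simpa only [add_sub_add_comm] using approxNum_le (T + U) hrank
      _ ≤ ‖T - R‖ + ‖U - S‖ := norm_add_le _ _

lemma approxNum_comp_le (n m : ℕ) (T : F →L[𝕜] G) (U : E →L[𝕜] F) :
    approxNum (n + m) (T ∘L U) ≤ approxNum n T * approxNum m U := by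
  have key : ∀ R : F →L[𝕜] G, (R : F →ₗ[𝕜] G).rank ≤ n → ∀ S : E →L[𝕜] F,
      (S : E →ₗ[𝕜] F).rank ≤ m → approxNum (n + m) (T ∘L U) ≤ ‖T - R‖ * ‖U - S‖ := by
    intro R hR S hS
    have hrank : ((R ∘L U + (T - R) ∘L S : E →L[𝕜] G) : E →ₗ[𝕜] G).rank ≤ ↑(n + m) := by
      push_cast
      refine (LinearMap.rank_add_le (R ∘L U : E →ₗ[𝕜] G) ((T - R) ∘L S)).trans (add_le_add ?_ ?_)
      · exact (LinearMap.rank_comp_le_left (U : E →ₗ[𝕜] F) (R : F →ₗ[𝕜] G)).trans hR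
      · exact Cardinal.lift_le_nat_iff.1 ((LinearMap.lift_rank_comp_le_right (S : E →ₗ[𝕜] F)
          ((T - R : F →L[𝕜] G) : F →ₗ[𝕜] G)).trans (Cardinal.lift_le_nat_iff.2 hS))
    have hdiff : T ∘L U - (R ∘L U + (T - R) ∘L S) = (T - R) ∘L (U - S) := by
      simp only [ContinuousLinearMap.comp_sub, ContinuousLinearMap.sub_comp]
      abel
    calc approxNum (n + m) (T ∘L U) ≤ ‖(T - R) ∘L (U - S)‖ := by
          simpa only [hdiff] using approxNum_le (T ∘L U) hrank
      _ ≤ ‖T - R‖ * ‖U - S‖ := ContinuousLinearMap.opNorm_comp_le _ _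
  conv_rhs => unfold approxNum
  rw [Real.iInf_mul_of_nonneg (le_ciInf fun _ => norm_nonneg _)]
  refine le_ciInf fun R => ?_
  rw [Real.mul_iInf_of_nonneg (norm_nonneg _)]
  exact le_ciInf fun S => key R R.2 S S.2

lemma le_approxNum_of_rank_lt {n : ℕ} {T : E →L[𝕜] F} (W : Submodule 𝕜 E)
    (hW : (n : Cardinal) < Module.rank 𝕜 W) {b : ℝ} (hb : ∀ x ∈ W, b * ‖x‖ ≤ ‖T x‖) :
    b ≤ approxNum n T := by
  refine le_approxNum fun R hR => ?_
  -- `W` is too large to embed into the range of `R`.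
  obtain ⟨x, hRx, hx⟩ : ∃ x : W, R x = 0 ∧ x ≠ 0 := by
    by_contra! h
    have hinj : Function.Injective ((R : E →ₗ[𝕜] F) ∘ₗ W.subtype) :=
      (injective_iff_map_eq_zero _).2 h
    have h := (lift_rank_range_of_injective _ hinj).symm.trans_le
      (Cardinal.lift_le.2 ((LinearMap.rank_comp_le_left _ _).trans hR))
    exact hW.not_ge (by simpa using h)
  have hx : 0 < ‖(x : E)‖ := norm_pos_iff.2 (by simpa using hx)
  refine le_of_mul_le_mul_right ?_ hx
  calc b * ‖(x : E)‖ ≤ ‖T x‖ := hb x x.2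
    _ = ‖(T - R) x‖ := by simp [hRx]
    _ ≤ ‖T - R‖ * ‖(x : E)‖ := (T - R).le_opNorm _

-- `approxNum` is antitone and `m + 1 ≤ c * (m / c + 1)`.
lemma exists_approxNum_le_of_mul_le {T : E →L[𝕜] F} {p c : ℕ} (hc : 0 < c) {D : ℝ}
    (h : ∀ n : ℕ, approxNum (c * n) T ≤ D / ((n : ℝ) + 1) ^ p) :
    ∃ C : ℝ, ∀ n : ℕ, approxNum n T ≤ C / ((n : ℝ) + 1) ^ p := by
  have hD : 0 ≤ D := by simpa using (approxNum_nonneg _ T).trans (h 0)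
  refine ⟨D * c ^ p, fun m => ?_⟩
  have hm : (m : ℝ) + 1 ≤ c * ((m / c : ℕ) + 1) := by
    exact_mod_cast Nat.lt_mul_div_succ m hc
  calc approxNum m T ≤ approxNum (c * (m / c)) T := approxNum_antitone T (Nat.mul_div_le m c)
    _ ≤ D / ((m / c : ℕ) + 1) ^ p := h _
    _ ≤ D * c ^ p / ((m : ℝ) + 1) ^ p := by
      rw [div_le_div_iff₀ (by positivity) (by positivity), mul_assoc, ← mul_pow]
      gcongr

def approxDecay (p : ℕ) : AddSubgroup (E →L[𝕜] F) where
  carrier := {T | ∃ C : ℝ, ∀ n : ℕ, approxNum n T ≤ C / ((n : ℝ) + 1) ^ p}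
  zero_mem' := ⟨0, fun n => by simpa using approxNum_le_norm n (0 : E →L[𝕜] F)⟩
  add_mem' := by
    rintro T U ⟨C, hC⟩ ⟨C', hC'⟩
    refine exists_approxNum_le_of_mul_le two_pos (D := C + C') fun n => ?_
    rw [two_mul, add_div]
    exact (approxNum_add_le n n T U).trans (add_le_add (hC n) (hC' n))
  neg_mem' := by
    rintro T ⟨C, hC⟩
    exact ⟨C, fun n => (approxNum_neg n T).trans_le (hC n)⟩

lemma mem_approxDecay_zero (T : E →L[𝕜] F) : T ∈ approxDecay 0 :=
  ⟨‖T‖, fun n => by simpa using approxNum_le_norm n T⟩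

lemma comp_mem_approxDecay {p q : ℕ} {T : F →L[𝕜] G} {U : E →L[𝕜] F}
    (hT : T ∈ approxDecay p) (hU : U ∈ approxDecay q) : T ∘L U ∈ approxDecay (p + q) := by
  obtain ⟨C, hC⟩ := hT
  obtain ⟨C', hC'⟩ := hU
  refine exists_approxNum_le_of_mul_le two_pos (D := C * C') fun n => ?_
  rw [two_mul, pow_add, mul_div_mul_comm]
  exact (approxNum_comp_le n n T U).trans
    (mul_le_mul (hC n) (hC' n) (approxNum_nonneg n U) ((approxNum_nonneg n T).trans (hC n)))

lemma not_mem_approxDecay_succ {T : E →L[𝕜] F} {p : ℕ} {c : ℝ} (hc : 0 < c)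
    (h : ∀ n : ℕ, c / ((n : ℝ) + 1) ^ p ≤ approxNum n T) : T ∉ approxDecay (p + 1) := by
  rintro ⟨C, hC⟩
  obtain ⟨n, hn⟩ := exists_nat_gt (C / c)
  have hle := (h n).trans (hC n)
  rw [div_le_div_iff₀ (by positivity) (by positivity), pow_succ] at hle
  have : c * ((n : ℝ) + 1) ≤ C :=
    le_of_mul_le_mul_left (a := ((n : ℝ) + 1) ^ p) (by linarith) (by positivity)
  rw [div_lt_iff₀ hc] at hn
  nlinarith

lemma conj_comp_conj {V : E →L[𝕜] F} {W : F →L[𝕜] E} (hWV : W ∘L V = 1) (T U : E →L[𝕜] E) :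
    (V ∘L T ∘L W) ∘L (V ∘L U ∘L W) = V ∘L (T ∘L U) ∘L W := by
  ext x
  simp [← ContinuousLinearMap.comp_apply W V, hWV]

lemma conj_mem_approxDecay_iff {V : E →L[𝕜] F} {W : F →L[𝕜] E} (hWV : W ∘L V = 1)
    {T : E →L[𝕜] E} {p : ℕ} :
    V ∘L T ∘L W ∈ approxDecay p ↔ T ∈ approxDecay p := by
  constructor
  · intro h
    have hT : T = W ∘L (V ∘L T ∘L W) ∘L V := by
      ext x
      simp [← ContinuousLinearMap.comp_apply W V, hWV]
    rw [hT]
    simpa using comp_mem_approxDecay (mem_approxDecay_zero W)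
      (comp_mem_approxDecay h (mem_approxDecay_zero V))
  · intro h
    simpa using comp_mem_approxDecay (mem_approxDecay_zero V)
      (comp_mem_approxDecay h (mem_approxDecay_zero W))

end ApproximationNumbers

section Diagonal

variable {𝕜 : Type*} [RCLike 𝕜]

lemma lp.norm_le_mul_of_forall {ι : Type*} {f g : ℓ²(ι, 𝕜)} {C : ℝ} (hC : 0 ≤ C)
    (h : ∀ i, ‖g i‖ ≤ C * ‖f i‖) : ‖g‖ ≤ C * ‖f‖ := by
  calc ‖g‖ ≤ ‖C • f‖ := lp.norm_mono two_ne_zero fun i => by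
        simpa [norm_smul, abs_of_nonneg hC] using h i
    _ = C * ‖f‖ := by rw [lp.norm_const_smul two_ne_zero, Real.norm_of_nonneg hC]

lemma lp.mul_norm_le_of_forall {ι : Type*} {f g : ℓ²(ι, 𝕜)} {C : ℝ} (hC : 0 ≤ C)
    (h : ∀ i, C * ‖f i‖ ≤ ‖g i‖) : C * ‖f‖ ≤ ‖g‖ := by
  calc C * ‖f‖ = ‖C • f‖ := by rw [lp.norm_const_smul two_ne_zero, Real.norm_of_nonneg hC]
    _ ≤ ‖g‖ := lp.norm_mono two_ne_zero fun i => by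
        simpa [norm_smul, abs_of_nonneg hC] using h i

noncomputable def diagOp (d : ℕ → 𝕜) {C : ℝ} (hd : ∀ k, ‖d k‖ ≤ C) : ℓ²(ℕ, 𝕜) →L[𝕜] ℓ²(ℕ, 𝕜) :=
  LinearMap.mkContinuous
    { toFun := fun f => ⟨fun k => d k * f k, ((lp.memℓp f).norm.const_mul C).mono fun k => by
        rw [norm_mul]; exact mul_le_mul_of_nonneg_right (hd k) (norm_nonneg _)⟩
      map_add' := fun f g => lp.ext <| funext fun k => mul_add _ _ _
      map_smul' := fun a f => lp.ext <| funext fun k => mul_left_comm _ _ _ }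
    C fun f => lp.norm_le_mul_of_forall ((norm_nonneg _).trans (hd 0)) fun k => by
      simp only [LinearMap.coe_mk, AddHom.coe_mk, norm_mul]
      exact mul_le_mul_of_nonneg_right (hd k) (norm_nonneg _)

lemma diagOp_apply (d : ℕ → 𝕜) {C : ℝ} (hd : ∀ k, ‖d k‖ ≤ C) (f : ℓ²(ℕ, 𝕜)) (k : ℕ) :
    diagOp d hd f k = d k * f k :=
  rfl

noncomputable def zeroExtend (n : ℕ) : (Fin n → 𝕜) →ₗ[𝕜] ℓ²(ℕ, 𝕜) where
  toFun c := ⟨fun k => if h : k < n then c ⟨k, h⟩ else 0,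
    (memℓp_zero ((Set.finite_Iio n).subset fun k hk => by
      by_contra h; exact hk (dif_neg h))).of_exponent_ge zero_le⟩
  map_add' c c' := lp.ext <| funext fun k => by
    simp only [lp.coeFn_add, Pi.add_apply]; split_ifs <;> simp
  map_smul' a c := lp.ext <| funext fun k => by
    simp only [lp.coeFn_smul, Pi.smul_apply, RingHom.id_apply]; split_ifs <;> simp

lemma zeroExtend_apply (n : ℕ) (c : Fin n → 𝕜) (k : ℕ) :
    zeroExtend n c k = if h : k < n then c ⟨k, h⟩ else 0 :=
  rfl

lemma mem_range_zeroExtend {n : ℕ} {f : ℓ²(ℕ, 𝕜)} :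
    f ∈ LinearMap.range (zeroExtend n) ↔ ∀ k, n ≤ k → f k = 0 := by
  constructor
  · rintro ⟨c, rfl⟩ k hk
    simp [zeroExtend_apply, not_lt.2 hk]
  · refine fun h => ⟨fun k => f k, lp.ext <| funext fun k => ?_⟩
    rw [zeroExtend_apply]
    split_ifs with hk
    · rfl
    · exact (h k (not_lt.1 hk)).symm

lemma rank_range_zeroExtend (n : ℕ) :
    Module.rank 𝕜 (LinearMap.range (zeroExtend (𝕜 := 𝕜) n)) = n := by
  have hinj : Function.Injective (zeroExtend (𝕜 := 𝕜) n) := fun c c' h => funext fun i => by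
    simpa [zeroExtend_apply] using congrArg (fun f : ℓ²(ℕ, 𝕜) => f i) h
  rw [rank_range_of_injective _ hinj, rank_fin_fun]

lemma approxNum_diagOp_le (d : ℕ → 𝕜) {C : ℝ} (hd : ∀ k, ‖d k‖ ≤ C) {n : ℕ} {c : ℝ}
    (hc : 0 ≤ c) (htail : ∀ k, n ≤ k → ‖d k‖ ≤ c) : approxNum n (diagOp d hd) ≤ c := by
  set dn : ℕ → 𝕜 := fun k => if k < n then d k else 0
  have hdn : ∀ k, ‖dn k‖ ≤ C := fun k => by
    by_cases hk : k < n
    · simpa [dn, hk] using hd k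
    · simpa [dn, hk] using (norm_nonneg _).trans (hd k)
  have hrank : ((diagOp dn hdn : _ →L[𝕜] _) : ℓ²(ℕ, 𝕜) →ₗ[𝕜] ℓ²(ℕ, 𝕜)).rank ≤ n := by
    rw [← rank_range_zeroExtend (𝕜 := 𝕜) n]
    refine Submodule.rank_mono ?_
    rintro _ ⟨f, rfl⟩
    exact mem_range_zeroExtend.2 fun k hk => by
      simp [diagOp_apply, dn, not_lt.2 hk]
  refine (approxNum_le _ hrank).trans <| ContinuousLinearMap.opNorm_le_bound _ hc fun f =>
    lp.norm_le_mul_of_forall hc fun k => ?_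
  simp only [sub_apply, lp.coeFn_sub, Pi.sub_apply, diagOp_apply, ← sub_mul, norm_mul]
  gcongr
  by_cases hk : k < n
  · simpa [dn, hk] using hc
  · simpa [dn, hk] using htail k (not_lt.1 hk)

lemma le_approxNum_of_diagonal {T : ℓ²(ℕ, 𝕜) →L[𝕜] ℓ²(ℕ, 𝕜)} {t : ℕ → 𝕜}
    (hT : ∀ f k, T f k = t k * f k) {m : ℕ} {b : ℝ} (hb : 0 ≤ b)
    (ht : ∀ k ≤ m, b ≤ ‖t k‖) : b ≤ approxNum m T := by
  refine le_approxNum_of_rank_lt (LinearMap.range (zeroExtend (m + 1)))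
    (by rw [rank_range_zeroExtend]; exact_mod_cast m.lt_succ_self) fun f hf =>
    lp.mul_norm_le_of_forall hb fun k => ?_
  rw [hT, norm_mul]
  by_cases hk : k ≤ m
  · exact mul_le_mul_of_nonneg_right (ht k hk) (norm_nonneg _)
  · simp [mem_range_zeroExtend.1 hf k (by omega)]

end Diagonal

section Harmonic

variable {𝕜 : Type*} [RCLike 𝕜]

lemma norm_inv_natCast_add_one (k : ℕ) : ‖((k : 𝕜) + 1)⁻¹‖ = ((k : ℝ) + 1)⁻¹ := by
  rw [norm_inv, ← Nat.cast_add_one, RCLike.norm_natCast, Nat.cast_add_one]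

noncomputable def harmonicOp : ℓ²(ℕ, 𝕜) →L[𝕜] ℓ²(ℕ, 𝕜) :=
  diagOp (fun k => ((k : 𝕜) + 1)⁻¹) (C := 1) fun k => by
    rw [norm_inv_natCast_add_one]
    exact inv_le_one_of_one_le₀ (by simp)

lemma harmonicOp_mem_approxDecay : (harmonicOp : ℓ²(ℕ, 𝕜) →L[𝕜] ℓ²(ℕ, 𝕜)) ∈ approxDecay 1 :=
  ⟨1, fun n => by
    simpa [harmonicOp] using approxNum_diagOp_le _ _ (n := n) (by positivity) fun k hk => by
      rw [norm_inv_natCast_add_one]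
      gcongr⟩

lemma harmonicOp_comp_self_not_mem_approxDecay :
    (harmonicOp ∘L harmonicOp : ℓ²(ℕ, 𝕜) →L[𝕜] ℓ²(ℕ, 𝕜)) ∉ approxDecay 3 :=
  not_mem_approxDecay_succ (p := 2) one_pos fun m =>
    le_approxNum_of_diagonal (t := fun k => ((k : 𝕜) + 1)⁻¹ * ((k : 𝕜) + 1)⁻¹)
      (fun f k => by simp [harmonicOp, diagOp_apply, mul_assoc]) (by positivity) fun k hk => by
        rw [norm_mul, norm_inv_natCast_add_one, one_div, ← inv_pow, sq]
        gcongr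

end Harmonic

section Embedding

variable {𝕜 E : Type*} [RCLike 𝕜] [NormedAddCommGroup E] [InnerProductSpace 𝕜 E] [CompleteSpace E]

lemma exists_orthonormal_nat (h : ¬ FiniteDimensional 𝕜 E) : ∃ e : ℕ → E, Orthonormal 𝕜 e := by
  obtain ⟨w, b, -⟩ := exists_hilbertBasis 𝕜 E
  have : Infinite w := by
    by_contra hw
    rw [not_infinite_iff_finite] at hw
    cases nonempty_fintype w
    exact h b.toOrthonormalBasis.toBasis.finiteDimensional_of_finite
  exact ⟨b ∘ Infinite.natEmbedding w, b.orthonormal.comp _ (Infinite.natEmbedding w).injective⟩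

lemma exists_isometry_from_l2 (h : ¬ FiniteDimensional 𝕜 E) :
    ∃ V : ℓ²(ℕ, 𝕜) →L[𝕜] E, ContinuousLinearMap.adjoint V ∘L V = 1 := by
  obtain ⟨e, he⟩ := exists_orthonormal_nat h
  let V := he.orthogonalFamily.linearIsometry
  exact ⟨V.toContinuousLinearMap,
    (ContinuousLinearMap.isometry_iff_adjoint_comp_self _).1 V.isometry⟩

end Embedding

set_option linter.unusedSectionVars false

lemma genBH_subset_s9 {J 𝒮 : Set (H →L[ℂ] H)} (hJ : IsBHIdeal J) (h : 𝒮 ⊆ J) : genBH 𝒮 ⊆ J :=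
  Set.sInter_subset_of_mem ⟨hJ, h⟩

lemma zero_mem_JGenJ (J 𝒮 : Set (H →L[ℂ] H)) : 0 ∈ JGenJ J 𝒮 :=
  ⟨0, Fin.elim0, Fin.elim0, Fin.elim0, fun i => i.elim0, by simp⟩

lemma JGenJ_subset_JSplus {J : Set (H →L[ℂ] H)} (h0 : 0 ∈ J) (S : H →L[ℂ] H) :
    JGenJ J {S} ⊆ JSplus J S :=
  fun Y hY => ⟨0, h0, 0, h0, Y, hY, by simp⟩

lemma mul_mem_JSplus {J : Set (H →L[ℂ] H)} (h0 : 0 ∈ J) {A : H →L[ℂ] H} (hA : A ∈ J)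
    (S : H →L[ℂ] H) : A * S ∈ JSplus J S :=
  ⟨A, hA, 0, h0, 0, zero_mem_JGenJ J {S}, by simp⟩

lemma isBHIdeal_approxDecay (p : ℕ) :
    IsBHIdeal (H := H) (approxDecay p : AddSubgroup (H →L[ℂ] H)) :=
  ⟨zero_mem _, fun _ hx _ hy => add_mem hx hy, fun _ hx => neg_mem hx, fun A _ hx =>
    ⟨by rw [← zero_add p]; exact comp_mem_approxDecay (mem_approxDecay_zero A) hx,
      comp_mem_approxDecay hx (mem_approxDecay_zero A)⟩⟩

lemma JGenJ_approxDecay_subset {p : ℕ} {S : H →L[ℂ] H} (hS : S ∈ approxDecay p) :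
    JGenJ (approxDecay p : AddSubgroup (H →L[ℂ] H)) {S} ⊆
      (approxDecay (p + p + p) : AddSubgroup (H →L[ℂ] H)) := by
  rintro _ ⟨n, A, X, B, hAXB, rfl⟩
  refine sum_mem fun i _ => ?_
  obtain ⟨hA, hX, hB⟩ := hAXB i
  have hX' := genBH_subset_s9 (isBHIdeal_approxDecay p) (Set.singleton_subset_iff.2 hS) hX
  exact comp_mem_approxDecay (comp_mem_approxDecay hA hX') hB

theorem stmt_9_general (hinf : ¬ FiniteDimensional ℂ H) :
    ∃ (J : Set (H →L[ℂ] H)) (S : H →L[ℂ] H), IsBHIdeal J ∧ S ∈ J ∧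
      JGenJ J {S} ⊂ JSplus J S ∧ ∃ A ∈ J, A * S ∉ JGenJ J {S} := by
  obtain ⟨V, hV⟩ := exists_isometry_from_l2 hinf
  set S := V ∘L harmonicOp ∘L ContinuousLinearMap.adjoint V
  have hS : S ∈ approxDecay 1 := (conj_mem_approxDecay_iff hV).2 harmonicOp_mem_approxDecay
  have hSS : S * S ∉ JGenJ (approxDecay 1 : AddSubgroup (H →L[ℂ] H)) {S} := fun h =>
    harmonicOp_comp_self_not_mem_approxDecay <| (conj_mem_approxDecay_iff hV).1 <|
      conj_comp_conj hV _ _ ▸ JGenJ_approxDecay_subset hS h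
  have h0 : (0 : H →L[ℂ] H) ∈ approxDecay 1 := zero_mem _
  exact ⟨_, S, isBHIdeal_approxDecay 1, hS,
    ⟨JGenJ_subset_JSplus h0 S, fun h => hSS (h (mul_mem_JSplus h0 hS S))⟩, S, hS, hSS⟩

/-- there exist a `B(H)`-ideal `J` and `S ∈ J` with
`J(S)J ⊊ JS + SJ + J(S)J`; specifically some `A ∈ J` has `AS ∉ J(S)J`. -/
theorem stmt_9 [SeparableSpace H] (hinf : ¬ FiniteDimensional ℂ H) :
    ∃ (J : Set (H →L[ℂ] H)) (S : H →L[ℂ] H), IsBHIdeal J ∧ S ∈ J ∧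
      JGenJ J {S} ⊂ JSplus J S ∧ ∃ A ∈ J, A * S ∉ JGenJ J {S} :=
  stmt_9_general hinf
end

section
/- Let J be a B(H)-ideal and let I be a J-ideal that contains some nonzero operator. Then I contains every finite-rank operator, i.e., F(H) ⊆ I. -/
open scoped BigOperators
open TopologicalSpace

variable {H : Type*} [NormedAddCommGroup H] [InnerProductSpace ℂ H] [CompleteSpace H]

/-! A nonzero `X` lets every rank-one operator factor as `A * X * B` with `A`, `B` rank-one.
Taking `X ∈ J` puts all rank-one operators in `J`; taking `X ∈ I` and using those rank-one
operators of `J` as `A` and `B` then puts them in `I`. A finite-rank `T` equals `P * T` for the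
orthogonal projection `P` onto its range, and expanding `P` in an orthonormal basis writes `T`
as a finite sum of rank-one operators. -/

open InnerProductSpace

theorem InnerProductSpace.rankOne_eq_rankOne_mul_mul_rankOne {𝕜 E : Type*} [RCLike 𝕜]
    [NormedAddCommGroup E] [InnerProductSpace 𝕜 E] (X : E →L[𝕜] E) {v : E} (hv : X v ≠ 0)
    (x y : E) :
    rankOne 𝕜 x y = rankOne 𝕜 ((inner 𝕜 (X v) (X v))⁻¹ • x) (X v) * X * rankOne 𝕜 v y := by
  rw [mul_assoc, ContinuousLinearMap.mul_def, ContinuousLinearMap.mul_def, comp_rankOne,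
    rankOne_comp_rankOne, map_smul, smul_apply, smul_smul,
    mul_inv_cancel₀ (inner_self_ne_zero.mpr hv), one_smul]

theorem ContinuousLinearMap.exists_eq_sum_rankOne {𝕜 E F : Type*} [RCLike 𝕜]
    [NormedAddCommGroup E] [InnerProductSpace 𝕜 E] [CompleteSpace E]
    [NormedAddCommGroup F] [InnerProductSpace 𝕜 F] [CompleteSpace F]
    (T : E →L[𝕜] F) [FiniteDimensional 𝕜 (LinearMap.range (T : E →ₗ[𝕜] F))] :
    ∃ (n : ℕ) (x : Fin n → F) (y : Fin n → E), T = ∑ i, rankOne 𝕜 (x i) (y i) := by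
  set V := LinearMap.range (T : E →ₗ[𝕜] F)
  let b := stdOrthonormalBasis 𝕜 V
  refine ⟨_, fun i ↦ b i, fun i ↦ adjoint T (b i), ?_⟩
  calc T = V.starProjection ∘L T := by
        ext x
        exact (V.starProjection_eq_self_iff.mpr (LinearMap.mem_range_self _ x)).symm
    _ = ∑ i, rankOne 𝕜 (b i : F) (b i : F) ∘L T := by
        rw [b.starProjection_eq_sum_rankOne, ContinuousLinearMap.finsetSum_comp]
    _ = _ := by simp_rw [rankOne_comp]

section

omit [CompleteSpace H]

variable {J I : Set (H →L[ℂ] H)}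

theorem IsBHIdeal.rankOne_mem (hJ : IsBHIdeal J) {X : H →L[ℂ] H} (hXJ : X ∈ J) (hX : X ≠ 0)
    (x y : H) : rankOne ℂ x y ∈ J := by
  obtain ⟨v, hv⟩ : ∃ v, X v ≠ 0 := DFunLike.ne_iff.mp hX
  rw [rankOne_eq_rankOne_mul_mul_rankOne X hv]
  exact (hJ.2.2.2 _ _ (hJ.2.2.2 _ X hXJ).1).2

theorem IsSubideal.rankOne_mem (hJ : IsBHIdeal J) (hI : IsSubideal J I) {X : H →L[ℂ] H}
    (hXI : X ∈ I) (hX : X ≠ 0) (x y : H) : rankOne ℂ x y ∈ I := by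
  obtain ⟨v, hv⟩ : ∃ v, X v ≠ 0 := DFunLike.ne_iff.mp hX
  have hrankOneJ := hJ.rankOne_mem (hI.1 hXI) hX
  rw [rankOne_eq_rankOne_mul_mul_rankOne X hv, mul_assoc]
  exact (hI.2.2.2.2 _ (hrankOneJ _ _) _ (hI.2.2.2.2 _ (hrankOneJ _ _) X hXI).2).1

theorem IsSubideal.sum_mem (hI : IsSubideal J I) {ι : Type*} (s : Finset ι)
    {f : ι → H →L[ℂ] H} (hf : ∀ i ∈ s, f i ∈ I) : ∑ i ∈ s, f i ∈ I :=
  Finset.sum_induction f (· ∈ I) (fun a b ha hb ↦ hI.2.2.1 a ha b hb) hI.2.1 hf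

end

theorem stmt_11_general
    (J I : Set (H →L[ℂ] H)) (hJ : IsBHIdeal J) (hI : IsSubideal J I)
    (hne : ∃ x ∈ I, x ≠ 0) :
    ∀ T : H →L[ℂ] H, IsFiniteRank T → T ∈ I := by
  obtain ⟨X, hXI, hX⟩ := hne
  intro T hT
  have : FiniteDimensional ℂ (LinearMap.range (T : H →ₗ[ℂ] H)) := hT
  obtain ⟨n, x, y, rfl⟩ := T.exists_eq_sum_rankOne
  exact hI.sum_mem _ fun i _ ↦ hI.rankOne_mem hJ hXI hX (x i) (y i)

/-- every nonzero `J`-ideal contains all finite-rank operators. -/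
theorem stmt_11 [SeparableSpace H] (hinf : ¬ FiniteDimensional ℂ H)
    (J I : Set (H →L[ℂ] H)) (hJ : IsBHIdeal J) (hI : IsSubideal J I)
    (hne : ∃ x ∈ I, x ≠ 0) :
    ∀ T : H →L[ℂ] H, IsFiniteRank T → T ∈ I :=
  stmt_11_general J I hJ hI hne
end

section
/- Let J be a B(H)-ideal and let S ∈ J with S ≠ 0. Then (S)_J = F(H) if and only if S has finite rank (i.e., S ∈ F(H)). -/
/-!
Every finite-rank operator is a finite sum of rank-one operators `x ⊗ y`, and when `S u ≠ 0`
each of them factors through `S` as `x ⊗ y = ‖S u‖⁻² (x ⊗ S u) · S · (u ⊗ y)`. Hence the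
finite-rank operators lie in `J`, form a linear `J`-ideal, and are contained in every `J`-ideal
containing `S`; so they make up `(S)_J` as soon as `S` itself has finite rank.
-/

open scoped BigOperators
open TopologicalSpace

variable {H : Type*} [NormedAddCommGroup H] [InnerProductSpace ℂ H] [CompleteSpace H]

open InnerProductSpace

section RankOne

variable {𝕜 E F : Type*} [RCLike 𝕜] [NormedAddCommGroup E] [InnerProductSpace 𝕜 E]

lemma rankOne_eq_rankOne_mul_mul_rankOne {S : E →L[𝕜] E} {u : E} (hu : S u ≠ 0) (x y : E) :
    rankOne 𝕜 x y = rankOne 𝕜 (((‖S u‖ : 𝕜) ^ 2)⁻¹ • x) (S u) * S * rankOne 𝕜 u y := by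
  have : (‖S u‖ : 𝕜) ≠ 0 := by simpa using hu
  rw [mul_assoc, ContinuousLinearMap.mul_def, ContinuousLinearMap.mul_def, comp_rankOne,
    rankOne_comp_rankOne, inner_self_eq_norm_sq_to_K, map_smul, smul_apply, smul_smul,
    mul_inv_cancel₀ (pow_ne_zero 2 this), one_smul]

variable [CompleteSpace E] [NormedAddCommGroup F] [InnerProductSpace 𝕜 F] [CompleteSpace F]

lemma exists_eq_sum_rankOne_of_finiteDimensional_range (T : E →L[𝕜] F)
    [FiniteDimensional 𝕜 (LinearMap.range (T : E →ₗ[𝕜] F))] :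
    ∃ (n : ℕ) (x : Fin n → F) (y : Fin n → E), T = ∑ i, rankOne 𝕜 (x i) (y i) := by
  set R := LinearMap.range (T : E →ₗ[𝕜] F)
  let b := stdOrthonormalBasis 𝕜 R
  refine ⟨_, fun i => b i, fun i => T.adjoint (b i), ?_⟩
  calc T = R.starProjection ∘L T := by
        ext z
        exact (Submodule.starProjection_eq_self_iff.2 (LinearMap.mem_range_self _ z)).symm
    _ = ∑ i, rankOne 𝕜 (b i : F) (b i : F) ∘L T := by
        rw [b.starProjection_eq_sum_rankOne]
        ext z
        simp only [ContinuousLinearMap.comp_apply, sum_apply]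
    _ = ∑ i, rankOne 𝕜 (b i : F) (T.adjoint (b i)) := by
        simp only [rankOne_comp]

end RankOne

section FiniteRank

variable {E : Type*} [NormedAddCommGroup E] [InnerProductSpace ℂ E]

lemma isFiniteRank_zero : IsFiniteRank (0 : E →L[ℂ] E) := by
  unfold IsFiniteRank
  rw [ContinuousLinearMap.toLinearMap_zero, LinearMap.range_zero]
  infer_instance

lemma isFiniteRank_rankOne (x y : E) : IsFiniteRank (rankOne ℂ x y) :=
  Submodule.finiteDimensional_of_le (S₂ := Submodule.span ℂ {x}) <| by
    rintro _ ⟨z, rfl⟩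
    exact Submodule.smul_mem _ _ (Submodule.mem_span_singleton_self x)

namespace IsFiniteRank

variable {T U : E →L[ℂ] E}

lemma add (hT : IsFiniteRank T) (hU : IsFiniteRank U) : IsFiniteRank (T + U) :=
  have : FiniteDimensional ℂ (LinearMap.range (T : E →ₗ[ℂ] E)) := hT
  have : FiniteDimensional ℂ (LinearMap.range (U : E →ₗ[ℂ] E)) := hU
  Submodule.finiteDimensional_of_le (LinearMap.range_add_le (T : E →ₗ[ℂ] E) U)

lemma neg (hT : IsFiniteRank T) : IsFiniteRank (-T) := by
  unfold IsFiniteRank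
  rwa [ContinuousLinearMap.toLinearMap_neg, LinearMap.range_neg]

lemma smul (c : ℂ) (hT : IsFiniteRank T) : IsFiniteRank (c • T) :=
  have : FiniteDimensional ℂ (LinearMap.range (T : E →ₗ[ℂ] E)) := hT
  Submodule.finiteDimensional_of_le (LinearMap.range_smul_le_range (T : E →ₗ[ℂ] E) c)

lemma mul_left (A : E →L[ℂ] E) (hT : IsFiniteRank T) : IsFiniteRank (A * T) := by
  have : FiniteDimensional ℂ (LinearMap.range (T : E →ₗ[ℂ] E)) := hT
  unfold IsFiniteRank
  rw [ContinuousLinearMap.toLinearMap_mul, Module.End.mul_eq_comp, LinearMap.range_comp]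
  infer_instance

lemma mul_right (A : E →L[ℂ] E) (hT : IsFiniteRank T) : IsFiniteRank (T * A) :=
  have : FiniteDimensional ℂ (LinearMap.range (T : E →ₗ[ℂ] E)) := hT
  Submodule.finiteDimensional_of_le
    (LinearMap.range_comp_le_range (A : E →ₗ[ℂ] E) (T : E →ₗ[ℂ] E))

end IsFiniteRank

lemma isFiniteRank_mem_of_mul_mul_mem [CompleteSpace E] {I : Set (E →L[ℂ] E)} {S : E →L[ℂ] E}
    (hS0 : S ≠ 0) (h0 : (0 : E →L[ℂ] E) ∈ I) (hadd : ∀ x ∈ I, ∀ y ∈ I, x + y ∈ I)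
    (hmul : ∀ A B : E →L[ℂ] E, IsFiniteRank A → IsFiniteRank B → A * S * B ∈ I)
    {T : E →L[ℂ] E} (hT : IsFiniteRank T) : T ∈ I := by
  have : FiniteDimensional ℂ (LinearMap.range (T : E →ₗ[ℂ] E)) := hT
  obtain ⟨n, x, y, rfl⟩ := exists_eq_sum_rankOne_of_finiteDimensional_range T
  obtain ⟨u, hu⟩ : ∃ u, S u ≠ 0 := by
    by_contra! h
    exact hS0 (ContinuousLinearMap.ext h)
  refine Finset.sum_induction _ (· ∈ I) (fun a b ha hb => hadd a ha b hb) h0 fun i _ => ?_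
  rw [rankOne_eq_rankOne_mul_mul_rankOne hu]
  exact hmul _ _ (isFiniteRank_rankOne _ _) (isFiniteRank_rankOne _ _)

variable {J : Set (E →L[ℂ] E)} {S : E →L[ℂ] E}

lemma IsBHIdeal.isFiniteRank_mem [CompleteSpace E] (hJ : IsBHIdeal J) (hS : S ∈ J)
    (hS0 : S ≠ 0) {T : E →L[ℂ] E} (hT : IsFiniteRank T) : T ∈ J :=
  isFiniteRank_mem_of_mul_mul_mem hS0 hJ.1 hJ.2.1
    (fun A B _ _ => (hJ.2.2.2 B _ (hJ.2.2.2 A S hS).1).2) hT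

lemma IsSubideal.isFiniteRank_mem [CompleteSpace E] {I : Set (E →L[ℂ] E)}
    (hI : IsSubideal J I) (hFJ : ∀ T, IsFiniteRank T → T ∈ J) (hS : S ∈ I) (hS0 : S ≠ 0)
    {T : E →L[ℂ] E} (hT : IsFiniteRank T) : T ∈ I :=
  have hmul := hI.2.2.2.2
  isFiniteRank_mem_of_mul_mul_mem hS0 hI.2.1 hI.2.2.1
    (fun A B hA hB => (hmul B (hFJ B hB) _ (hmul A (hFJ A hA) S hS).1).2) hT

lemma isLinearSubideal_setOf_isFiniteRank (hFJ : ∀ T, IsFiniteRank T → T ∈ J) :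
    IsLinearSubideal J {T : E →L[ℂ] E | IsFiniteRank T} :=
  ⟨⟨hFJ, isFiniteRank_zero, fun _ hx _ hy => hx.add hy, fun _ hx => hx.neg,
    fun A _ _ hx => ⟨hx.mul_left A, hx.mul_right A⟩⟩, fun c _ hx => hx.smul c⟩

end FiniteRank

section GenLin

variable {E : Type*} [NormedAddCommGroup E] [InnerProductSpace ℂ E] {J 𝒮 : Set (E →L[ℂ] E)}

lemma subset_genLin : 𝒮 ⊆ genLin J 𝒮 :=
  fun _ hx => Set.mem_sInter.2 fun _ hI => hI.2 hx

lemma genLin_subset {I : Set (E →L[ℂ] E)} (hI : IsLinearSubideal J I) (h : 𝒮 ⊆ I) :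
    genLin J 𝒮 ⊆ I :=
  Set.sInter_subset_of_mem ⟨hI, h⟩

end GenLin

theorem stmt_12_general
    (J : Set (H →L[ℂ] H)) (hJ : IsBHIdeal J)
    (S : H →L[ℂ] H) (hS : S ∈ J) (hS0 : S ≠ 0) :
    genLin J {S} = {T : H →L[ℂ] H | IsFiniteRank T} ↔ IsFiniteRank S := by
  refine ⟨fun h => (h ▸ subset_genLin rfl : S ∈ {T : H →L[ℂ] H | IsFiniteRank T}), fun hSfr => ?_⟩
  have hFJ : ∀ T, IsFiniteRank T → T ∈ J := fun _ => hJ.isFiniteRank_mem hS hS0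
  refine (genLin_subset (isLinearSubideal_setOf_isFiniteRank hFJ)
    (Set.singleton_subset_iff.2 hSfr)).antisymm ?_
  exact Set.subset_sInter fun I ⟨hI, hSI⟩ _ hT => hI.1.isFiniteRank_mem hFJ (hSI rfl) hS0 hT

/-- for `0 ≠ S ∈ J`, `(S)_J = F(H)` iff `S` has finite rank. -/
theorem stmt_12 [SeparableSpace H] (hinf : ¬ FiniteDimensional ℂ H)
    (J : Set (H →L[ℂ] H)) (hJ : IsBHIdeal J)
    (S : H →L[ℂ] H) (hS : S ∈ J) (hS0 : S ≠ 0) :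
    genLin J {S} = {T : H →L[ℂ] H | IsFiniteRank T} ↔ IsFiniteRank S :=
  stmt_12_general J hJ S hS hS0
end
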